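/- Let (u_k) be a sequence of positive reals and let (y_n) be the symmetric series built from (u_k), i.e. y_{2k−1} = u_k and y_{2k} = −u_k. Suppose the set X = {u_k : k ∈ ℕ} ∪ {−u_k : k ∈ ℕ} is ε-separated for some ε > 0 and that no value occurs with infinite order (i.e. for every e ∈ X the set {n : y_n = e} is finite). Then SR_2(Σ y_n) = {0}. -/

import Mathlib

open Filter Topology

/-- The 2n sum range of the series `Σ y_n`. -/
def SR2 (y : ℕ → ℝ) : Set ℝ :=
  {s : ℝ | ∃ π : Equiv.Perm ℕ,
    Tendsto (fun n : ℕ => ∑ k ∈ Finset.range (2 * n), y (π k)) atTop (nhds s)}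

/-- A set `E ⊆ ℝ` is `ε`-separated if all pairwise distances between distinct
elements exceed `ε`. -/
def IsSeparated' (ε : ℝ) (E : Set ℝ) : Prop :=
  ∀ a ∈ E, ∀ b ∈ E, a ≠ b → ε < |a - b|

/-!
Along a rearrangement whose even partial sums converge, the increments
`y (π (2n)) + y (π (2n+1))` tend to `0`. Both `y (π (2n))` and `-y (π (2n+1))` lie in the
`ε`-separated set `X`, so the increments are eventually exactly `0` and the limit is a finite
partial sum `∑ k < 2N, y (π k)`. This sum vanishes: let `B` be the finite set of indices whose
value is `±` a value of the partial sum. On `B` the terms cancel in the pairs `{2k, 2k+1}`, and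
on `B` minus the first `2N` terms of the rearrangement they cancel in its consecutive pairs.
-/

open Function

section NegatingInvolution

variable {α β : Type*} [AddCommGroup β] [IsAddTorsionFree β]

theorem Finset.sum_eq_zero_of_involutive_neg {s : Finset α} {f : α → β} {σ : α → α}
    (hσ : Involutive σ) (hmem : ∀ a ∈ s, σ a ∈ s) (hf : ∀ a ∈ s, f (σ a) = -f a) :
    ∑ a ∈ s, f a = 0 :=
  Finset.sum_involution (fun a _ => σ a) (fun a ha => by rw [hf a ha, add_neg_cancel])
    (fun a ha hne hfix => hne (self_eq_neg.mp (by rw [← hf a ha, hfix])))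
    hmem (fun a _ => hσ a)

theorem Finset.sum_eq_zero_of_involutive_neg_of_involutive_neg_compl (s : Finset α)
    {f : α → β} (hfin : ∀ e, (f ⁻¹' {e}).Finite)
    {σ : α → α} (hσ : Involutive σ) (hfσ : ∀ a, f (σ a) = -f a)
    {ρ : α → α} (hρ : Involutive ρ) (hρs : ∀ a ∉ s, ρ a ∉ s ∧ f (ρ a) = -f a) :
    ∑ a ∈ s, f a = 0 := by
  classical
  set T : Set β := f '' s ∪ -(f '' s)
  have hT : ∀ b ∈ T, -b ∈ T := by
    intro b hb
    simp only [T, Set.mem_union, Set.mem_neg, neg_neg] at hb ⊢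
    exact hb.symm
  have hB : (f ⁻¹' T).Finite :=
    ((s.finite_toSet.image f).union (s.finite_toSet.image f).neg).preimage' fun e _ => hfin e
  have hmemB : ∀ a, a ∈ hB.toFinset ↔ f a ∈ T := fun a => hB.mem_toFinset
  have hsB : s ⊆ hB.toFinset := fun a ha => (hmemB a).2 (Or.inl ⟨a, ha, rfl⟩)
  have hsumB : ∑ a ∈ hB.toFinset, f a = 0 :=
    Finset.sum_eq_zero_of_involutive_neg hσ
      (fun a ha => (hmemB _).2 (hfσ a ▸ hT _ ((hmemB a).1 ha))) (fun a _ => hfσ a)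
  have hsumBs : ∑ a ∈ hB.toFinset \ s, f a = 0 := by
    refine Finset.sum_eq_zero_of_involutive_neg hρ (fun a ha => ?_) (fun a ha => ?_)
    · obtain ⟨haB, has⟩ := Finset.mem_sdiff.1 ha
      obtain ⟨hρa, hfρa⟩ := hρs a has
      exact Finset.mem_sdiff.2 ⟨(hmemB _).2 (hfρa ▸ hT _ ((hmemB a).1 haB)), hρa⟩
    · exact (hρs a (Finset.mem_sdiff.1 ha).2).2
  rwa [← Finset.sum_sdiff hsB, hsumBs, zero_add] at hsumB

end NegatingInvolution

section Pairs

variable {M : Type*}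

theorem Finset.sum_range_two_mul [AddCommMonoid M] (z : ℕ → M) (n : ℕ) :
    ∑ k ∈ Finset.range (2 * n), z k =
      ∑ i ∈ Finset.range n, (z (2 * i) + z (2 * i + 1)) := by
  induction n with
  | zero => simp
  | succ n ih => rw [mul_add, mul_one, Finset.sum_range_succ, Finset.sum_range_succ,
      Finset.sum_range_succ, ih, add_assoc]

theorem sum_range_two_mul_eq_of_pairs_cancel [AddCommMonoid M] {z : ℕ → M} {N : ℕ}
    (hz : ∀ i ≥ N, z (2 * i) + z (2 * i + 1) = 0) {n : ℕ} (hn : N ≤ n) :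
    ∑ k ∈ Finset.range (2 * n), z k = ∑ k ∈ Finset.range (2 * N), z k := by
  rw [Finset.sum_range_two_mul, Finset.sum_range_two_mul, Finset.eventually_constant_sum hz hn]

theorem eq_sum_of_tendsto_of_pairs_cancel [AddCommMonoid M] [TopologicalSpace M] [T2Space M]
    {z : ℕ → M} {N : ℕ} (hz : ∀ i ≥ N, z (2 * i) + z (2 * i + 1) = 0) {s : M}
    (hs : Tendsto (fun n => ∑ k ∈ Finset.range (2 * n), z k) atTop (𝓝 s)) :
    s = ∑ k ∈ Finset.range (2 * N), z k :=
  tendsto_nhds_unique hs <| tendsto_const_nhds.congr' <|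
    eventually_atTop.2 ⟨N, fun _ hn => (sum_range_two_mul_eq_of_pairs_cancel hz hn).symm⟩

def pairSwap (m : ℕ) : ℕ := if m % 2 = 0 then m + 1 else m - 1

theorem pairSwap_involutive : Involutive pairSwap := fun m => by
  unfold pairSwap; split_ifs <;> omega

theorem le_pairSwap {N m : ℕ} (hm : 2 * N ≤ m) : 2 * N ≤ pairSwap m := by
  unfold pairSwap; split_ifs <;> omega

theorem apply_pairSwap_of_pairs_cancel [AddGroup M] {z : ℕ → M} {N : ℕ}
    (hz : ∀ i ≥ N, z (2 * i) + z (2 * i + 1) = 0) {m : ℕ} (hm : 2 * N ≤ m) :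
    z (pairSwap m) = -z m := by
  obtain ⟨i, rfl | rfl⟩ := Nat.even_or_odd' m
  · have hi : pairSwap (2 * i) = 2 * i + 1 := by unfold pairSwap; split_ifs <;> omega
    rw [hi, eq_neg_of_add_eq_zero_right (hz i (by omega))]
  · have hi : pairSwap (2 * i + 1) = 2 * i := by unfold pairSwap; split_ifs <;> omega
    rw [hi, eq_neg_of_add_eq_zero_left (hz i (by omega))]

end Pairs

theorem IsSeparated'.add_eq_zero {ε : ℝ} {E : Set ℝ} (hsep : IsSeparated' ε E) {a b : ℝ}
    (ha : a ∈ E) (hb : -b ∈ E) (hab : |a + b| ≤ ε) : a + b = 0 := by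
  by_contra h
  have := hsep a ha (-b) hb fun hab' => h (by rw [hab', neg_add_cancel])
  rw [sub_neg_eq_add] at this
  linarith

theorem exists_pairs_cancel_of_tendsto {ε : ℝ} (hε : 0 < ε) {E : Set ℝ} (hsep : IsSeparated' ε E)
    {z : ℕ → ℝ} (hzE : ∀ n, z n ∈ E) (hnegE : ∀ n, -z n ∈ E) {s : ℝ}
    (hs : Tendsto (fun n => ∑ k ∈ Finset.range (2 * n), z k) atTop (𝓝 s)) :
    ∃ N, ∀ i ≥ N, z (2 * i) + z (2 * i + 1) = 0 := by
  have hstep : Tendsto (fun n => z (2 * n) + z (2 * n + 1)) atTop (𝓝 0) := by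
    have := (hs.comp (tendsto_add_atTop_nat 1)).sub hs
    rw [sub_self] at this
    refine this.congr fun n => ?_
    simp only [comp_apply, mul_add, mul_one, Finset.sum_range_succ]
    abel
  obtain ⟨N, hN⟩ := eventually_atTop.1 (hstep.eventually (Metric.closedBall_mem_nhds 0 hε))
  refine ⟨N, fun i hi => hsep.add_eq_zero (hzE _) (hnegE _) ?_⟩
  simpa [Real.dist_eq] using hN i hi

theorem zero_mem_SR2 {y : ℕ → ℝ} (hy : ∀ k, y (2 * k) + y (2 * k + 1) = 0) : 0 ∈ SR2 y :=
  ⟨Equiv.refl ℕ, tendsto_const_nhds.congr fun n => by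
    simpa using (sum_range_two_mul_eq_of_pairs_cancel (fun i _ => hy i) n.zero_le).symm⟩

theorem SR2_separated_no_infinite_order_general (u : ℕ → ℝ)
    (y : ℕ → ℝ) (hy : ∀ k : ℕ, y (2 * k) = u k ∧ y (2 * k + 1) = -u k)
    (ε : ℝ) (hε : ε > 0)
    (hsep : IsSeparated' ε (Set.range u ∪ Set.range (fun k => -u k)))
    (hfin : ∀ e ∈ Set.range u ∪ Set.range (fun k => -u k),
      {n : ℕ | y n = e}.Finite) :
    SR2 y = {0} := by
  have hpairs : ∀ k, y (2 * k) + y (2 * k + 1) = 0 := fun k => by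
    rw [(hy k).1, (hy k).2, add_neg_cancel]
  have hneg : ∀ n, y (pairSwap n) = -y n := fun n =>
    apply_pairSwap_of_pairs_cancel (N := 0) (fun i _ => hpairs i) (by omega)
  have hmem : ∀ n, y n ∈ Set.range u ∪ Set.range (fun k => -u k) := fun n => by
    obtain ⟨k, rfl | rfl⟩ := Nat.even_or_odd' n
    exacts [Or.inl ⟨k, (hy k).1.symm⟩, Or.inr ⟨k, (hy k).2.symm⟩]
  have hfib : ∀ e, (y ⁻¹' {e}).Finite := fun e => by
    by_cases he : e ∈ Set.range u ∪ Set.range (fun k => -u k)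
    · exact hfin e he
    · exact Set.finite_empty.subset fun n (hn : y n = e) => he (hn ▸ hmem n)
  refine Set.eq_singleton_iff_unique_mem.2 ⟨zero_mem_SR2 hpairs, ?_⟩
  rintro s ⟨π, hs⟩
  obtain ⟨N, hN⟩ := exists_pairs_cancel_of_tendsto hε hsep (fun n => hmem (π n))
    (fun n => hneg (π n) ▸ hmem _) hs
  rw [eq_sum_of_tendsto_of_pairs_cancel hN hs]
  have hfibπ : ∀ e, ((fun k => y (π k)) ⁻¹' {e}).Finite := fun e =>
    (hfib e).preimage (f := π) π.injective.injOn
  -- `σ` pairs the positions of `u k` and `-u k`, `pairSwap` the late terms of the rearrangement.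
  refine Finset.sum_eq_zero_of_involutive_neg_of_involutive_neg_compl _ hfibπ
    (σ := π.symm ∘ pairSwap ∘ π) (fun a => by simp [pairSwap_involutive _])
    (fun a => by simp [hneg]) pairSwap_involutive fun a ha => ?_
  simp only [Finset.mem_range, not_lt] at ha ⊢
  exact ⟨le_pairSwap ha, apply_pairSwap_of_pairs_cancel (z := fun k => y (π k)) hN ha⟩

/-- The symmetric series built from positive reals `(u_k)`:
`y (2*k) = u k` and `y (2*k+1) = -u k` (0-indexed). -/
theorem SR2_separated_no_infinite_order (u : ℕ → ℝ) (hu : ∀ k, 0 < u k)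
    (y : ℕ → ℝ) (hy : ∀ k : ℕ, y (2 * k) = u k ∧ y (2 * k + 1) = -u k)
    (ε : ℝ) (hε : ε > 0)
    (hsep : IsSeparated' ε (Set.range u ∪ Set.range (fun k => -u k)))
    (hfin : ∀ e ∈ Set.range u ∪ Set.range (fun k => -u k),
      {n : ℕ | y n = e}.Finite) :
    SR2 y = {0} :=
  SR2_separated_no_infinite_order_general u y hy ε hε hsep hfin
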